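/- Let (Q,R) be a gentle presentation and write H^m for the degree-m cohomology of the complex k(Γ∥B). The following are equivalent: (1) the set B is finite (equivalently, the algebra kQ/⟨R⟩ is finite-dimensional); (2) H^0 is finite-dimensional; (3) H^1 is finite-dimensional; (4) there is no cocomplete cycle in (Q,R). Moreover, when these hold, H^m is finite-dimensional for every m ≥ 0. -/

import Mathlib

/-!
Common framework: quivers, paths (as a start vertex together with a list of
composable arrows, listed in order of traversal, so that the paper's path
`c_m ⋯ c_1` corresponds to the list `[c_1, …, c_m]`), gentle and quadratic
monomial presentations, the cochain complex `k(Γ ∥ B)` and the chain complex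
`k(B ⊙ Γ)` of the paper.
-/

namespace GentleTT

structure Quiv where
  V : Type
  A : Type
  [fintV : Fintype V]
  [fintA : Fintype A]
  [decV : DecidableEq V]
  [decA : DecidableEq A]
  src : A → V
  tgt : A → V

attribute [instance] Quiv.fintV Quiv.fintA Quiv.decV Quiv.decA

/-- A "path datum": a start vertex together with the list of arrows traversed. -/
abbrev PathDat (Q : Quiv) := Q.V × List Q.A

def psrc (Q : Quiv) (p : PathDat Q) : Q.V := p.1

def ptgt (Q : Quiv) (p : PathDat Q) : Q.V := p.2.getLast?.elim p.1 Q.tgt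

def plen (Q : Quiv) (p : PathDat Q) : ℕ := p.2.length

/-- `p` is a genuine path: consecutive arrows compose, and the recorded start
vertex is the source of the first arrow (if any). -/
def Ok (Q : Quiv) (p : PathDat Q) : Prop :=
  p.2.Chain' (fun a b => Q.tgt a = Q.src b) ∧ ∀ a ∈ p.2.head?, Q.src a = p.1

/-- `p` is a path none of whose length-2 subpaths lies in `R`
(an element of the basis `B` of `kQ/⟨R⟩`). -/
def InB (Q : Quiv) (R : Set (Q.A × Q.A)) (p : PathDat Q) : Prop :=
  Ok Q p ∧ p.2.Chain' (fun a b => (a, b) ∉ R)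

/-- `p` is a path all of whose length-2 subpaths lie in `R` (an element of `Γ`). -/
def InG (Q : Quiv) (R : Set (Q.A × Q.A)) (p : PathDat Q) : Prop :=
  Ok Q p ∧ p.2.Chain' (fun a b => (a, b) ∈ R)

/-- Parallel paths: same source and same target. -/
def Par (Q : Quiv) (p q : PathDat Q) : Prop :=
  psrc Q p = psrc Q q ∧ ptgt Q p = ptgt Q q

/-- Antiparallel paths: `s(p) = t(q)` and `t(p) = s(q)`. -/
def AntiPar (Q : Quiv) (p q : PathDat Q) : Prop :=
  psrc Q p = ptgt Q q ∧ ptgt Q p = psrc Q q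

/-- A cycle: a path of positive length whose source equals its target. -/
def IsCycle (Q : Quiv) (p : PathDat Q) : Prop :=
  Ok Q p ∧ p.2 ≠ [] ∧ psrc Q p = ptgt Q p

/-- Rotation of a cycle: the paper's `rot (c_m ⋯ c_1) = c_{m-1} ⋯ c_1 c_m`
(the last arrow traversed becomes the first one traversed). -/
def rotP (Q : Quiv) (p : PathDat Q) : PathDat Q :=
  match p.2.getLast? with
  | none => p
  | some a => (Q.src a, a :: p.2.dropLast)

/-- Iterated rotation `rot^i`. -/
def rotI (Q : Quiv) (i : ℕ) (p : PathDat Q) : PathDat Q := (rotP Q)^[i] p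

def powL {α : Type} (l : List α) : ℕ → List α
  | 0 => []
  | n + 1 => l ++ powL l n

/-- The `n`-th power `p^n` of a (cyclic) path. -/
def powP (Q : Quiv) (p : PathDat Q) (n : ℕ) : PathDat Q := (p.1, powL p.2 n)

/-- A primitive cycle: a cycle that is not a proper power of another cycle. -/
def IsPrimitive (Q : Quiv) (p : PathDat Q) : Prop :=
  IsCycle Q p ∧ ∀ (q : PathDat Q) (n : ℕ), IsCycle Q q → 2 ≤ n → p ≠ powP Q q n

/-- The period of a cycle: the least `i ≥ 1` with `rot^i p = p`. -/
noncomputable def periodP (Q : Quiv) (p : PathDat Q) : ℕ :=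
  sInf {i : ℕ | 1 ≤ i ∧ rotI Q i p = p}

/-- Two cycles are conjugate (belong to the same circuit) if one is obtained
from the other by iterated rotation. -/
def RotEquiv (Q : Quiv) (p q : PathDat Q) : Prop := ∃ i : ℕ, rotI Q i p = q

/-- A cocomplete cycle: `p² ∈ B`. -/
def Cocomplete (Q : Quiv) (R : Set (Q.A × Q.A)) (p : PathDat Q) : Prop :=
  IsCycle Q p ∧ InB Q R (powP Q p 2)

/-- A complete cycle: `p² ∈ Γ`. -/
def Complete (Q : Quiv) (R : Set (Q.A × Q.A)) (p : PathDat Q) : Prop :=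
  IsCycle Q p ∧ InG Q R (powP Q p 2)

/-- `B`-maximal path: in `B` and not a proper subpath of another element of `B`. -/
def BMax (Q : Quiv) (R : Set (Q.A × Q.A)) (p : PathDat Q) : Prop :=
  InB Q R p ∧ ∀ q : PathDat Q, InB Q R q → p.2 <:+: q.2 → p.2 = q.2

/-- `Γ`-maximal path: in `Γ` and not a proper subpath of another element of `Γ`. -/
def GMax (Q : Quiv) (R : Set (Q.A × Q.A)) (p : PathDat Q) : Prop :=
  InG Q R p ∧ ∀ q : PathDat Q, InG Q R q → p.2 <:+: q.2 → p.2 = q.2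

def Adj (Q : Quiv) (v w : Q.V) : Prop :=
  ∃ a : Q.A, (Q.src a = v ∧ Q.tgt a = w) ∨ (Q.src a = w ∧ Q.tgt a = v)

/-- Connectedness of the underlying graph of the quiver. -/
def Connected (Q : Quiv) : Prop := ∀ v w : Q.V, Relation.ReflTransGen (Adj Q) v w

/-- A quadratic monomial presentation: the relations are paths of length 2. -/
def IsQuadMon (Q : Quiv) (R : Set (Q.A × Q.A)) : Prop :=
  ∀ r ∈ R, Q.tgt r.1 = Q.src r.2

/-- A gentle presentation. -/
structure IsGentle (Q : Quiv) (R : Set (Q.A × Q.A)) : Prop where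
  nonempty : Nonempty Q.V
  connected : Connected Q
  relComposable : ∀ r ∈ R, Q.tgt r.1 = Q.src r.2
  srcLe : ∀ v : Q.V, {a : Q.A | Q.src a = v}.ncard ≤ 2
  tgtLe : ∀ v : Q.V, {a : Q.A | Q.tgt a = v}.ncard ≤ 2
  uniqNotRelAfter : ∀ a : Q.A, {b : Q.A | Q.tgt a = Q.src b ∧ (a, b) ∉ R}.Subsingleton
  uniqNotRelBefore : ∀ a : Q.A, {c : Q.A | Q.tgt c = Q.src a ∧ (c, a) ∉ R}.Subsingleton
  uniqRelAfter : ∀ a : Q.A, {b : Q.A | Q.tgt a = Q.src b ∧ (a, b) ∈ R}.Subsingleton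
  uniqRelBefore : ∀ a : Q.A, {c : Q.A | Q.tgt c = Q.src a ∧ (c, a) ∈ R}.Subsingleton

/-- A spanning tree of the (finite, connected) quiver `Q`: a set of arrows
which connects all vertices and has exactly `|Q₀| - 1` elements. -/
def IsSpanningTree (Q : Quiv) (T : Set Q.A) : Prop :=
  (∀ v w : Q.V, Relation.ReflTransGen
      (fun x y => ∃ a ∈ T, (Q.src a = x ∧ Q.tgt a = y) ∨ (Q.src a = y ∧ Q.tgt a = x)) v w) ∧
  T.ncard + 1 = Fintype.card Q.V

/-- A set of representatives, one for each rotation class of cycles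
satisfying `Pred`. -/
def IsRepSet (Q : Quiv) (P : Set (PathDat Q)) (Pred : PathDat Q → Prop) : Prop :=
  (∀ p ∈ P, Pred p) ∧ ∀ q : PathDat Q, Pred q → ∃! p, p ∈ P ∧ RotEquiv Q q p

/-- `S` is a valid choice of the paper's set `Crep` for the predicate `Pred`
(e.g. cocompleteness, or completeness): it consists of all positive powers of a
chosen set of representatives of the rotation classes of primitive cycles
satisfying `Pred`. -/
def IsCrep (Q : Quiv) (S : Set (PathDat Q)) (Pred : PathDat Q → Prop) : Prop :=
  ∃ P : Set (PathDat Q),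
    IsRepSet Q P (fun p => IsPrimitive Q p ∧ Pred p) ∧
    S = {x | ∃ p ∈ P, ∃ n : ℕ, 1 ≤ n ∧ x = powP Q p n}

/-! ### The cochain complex `k(Γ ∥ B)` -/

/-- Membership in the degree-`m` basis `Γ_m ∥ B` of the cochain complex. -/
def GBmem (Q : Quiv) (R : Set (Q.A × Q.A)) (m : ℕ) (x : PathDat Q × PathDat Q) : Prop :=
  InG Q R x.1 ∧ plen Q x.1 = m ∧ InB Q R x.2 ∧ Par Q x.1 x.2

abbrev GB (Q : Quiv) (R : Set (Q.A × Q.A)) (m : ℕ) :=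
  {x : PathDat Q × PathDat Q // GBmem Q R m x}

/-- The degree-`m` component of the cochain complex `k(Γ ∥ B)`. -/
abbrev Coch (k : Type) [Field k] (Q : Quiv) (R : Set (Q.A × Q.A)) (m : ℕ) :=
  GB Q R m →₀ k

/-- The basis vector of `k(Γ_m ∥ B)` attached to a raw pair of path data
(and `0` if the pair is not in `Γ_m ∥ B`). -/
noncomputable def bv (k : Type) [Field k] (Q : Quiv) (R : Set (Q.A × Q.A)) (m : ℕ)
    (x : PathDat Q × PathDat Q) : Coch k Q R m := by
  classical
  exact if h : GBmem Q R m x then Finsupp.single (⟨x, h⟩ : GB Q R m) (1 : k) else 0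

/-- Extension on the left (in the paper's notation): `p ↦ b p`. -/
def extL (Q : Quiv) (b : Q.A) (p : PathDat Q) : PathDat Q := (p.1, p.2 ++ [b])

/-- Extension on the right (in the paper's notation): `p ↦ p a`. -/
def extR (Q : Quiv) (a : Q.A) (p : PathDat Q) : PathDat Q := (Q.src a, a :: p.2)

/-- The differential on a basis element:
`d^m (γ, α) = Σ_b (bγ, bα) - (-1)^m Σ_a (γa, αa)`. -/
noncomputable def dB (k : Type) [Field k] (Q : Quiv) (R : Set (Q.A × Q.A)) (m : ℕ)
    (x : GB Q R m) : Coch k Q R (m + 1) := by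
  classical
  exact
    (∑ b : Q.A,
      if h : GBmem Q R (m + 1) (extL Q b x.val.1, extL Q b x.val.2) then
        Finsupp.single (⟨_, h⟩ : GB Q R (m + 1)) (1 : k) else 0)
    - ((-1 : k) ^ m) •
      (∑ a : Q.A,
        if h : Q.tgt a = psrc Q x.val.1 ∧
            GBmem Q R (m + 1) (extR Q a x.val.1, extR Q a x.val.2) then
          Finsupp.single (⟨_, h.2⟩ : GB Q R (m + 1)) (1 : k) else 0)

/-- The differential `d^m : k(Γ_m ∥ B) → k(Γ_{m+1} ∥ B)`. -/
noncomputable def dLin (k : Type) [Field k] (Q : Quiv) (R : Set (Q.A × Q.A)) (m : ℕ) :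
    Coch k Q R m →ₗ[k] Coch k Q R (m + 1) :=
  Finsupp.linearCombination k (dB k Q R m)

/-- The element `𝟙 = Σ_{i ∈ Q₀} (e_i, e_i)` (placed in degree `m`; it is the
intended element when `m = 0`). -/
noncomputable def oneD (k : Type) [Field k] (Q : Quiv) (R : Set (Q.A × Q.A)) (m : ℕ) :
    Coch k Q R m :=
  ∑ i : Q.V, bv k Q R m ((i, []), (i, []))

/-- `⟨α⟩ = Σ_{i=0}^{r-1} (s(rot^i α), rot^i α)`, `r` the period of `α`. -/
noncomputable def cycB (k : Type) [Field k] (Q : Quiv) (R : Set (Q.A × Q.A)) (m : ℕ)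
    (α : PathDat Q) : Coch k Q R m :=
  ∑ i ∈ Finset.range (periodP Q α),
    bv k Q R m ((psrc Q (rotI Q i α), []), rotI Q i α)

/-- `⟨C⟩ = Σ_{i=0}^{r-1} (-1)^{i m} (rot^i C, s(rot^i C))`, `r` the period of `C`. -/
noncomputable def cycG (k : Type) [Field k] (Q : Quiv) (R : Set (Q.A × Q.A)) (m : ℕ)
    (C : PathDat Q) : Coch k Q R m :=
  ∑ i ∈ Finset.range (periodP Q C),
    ((-1 : k) ^ (i * m)) • bv k Q R m (rotI Q i C, (psrc Q (rotI Q i C), []))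

/-- The coboundary subspace in degree `m` (zero in degree `0`). -/
noncomputable def cobSp (k : Type) [Field k] (Q : Quiv) (R : Set (Q.A × Q.A)) :
    (m : ℕ) → Submodule k (Coch k Q R m)
  | 0 => ⊥
  | m + 1 => LinearMap.range (dLin k Q R m)

/-- The cocycle subspace in degree `m`. -/
noncomputable def cocSp (k : Type) [Field k] (Q : Quiv) (R : Set (Q.A × Q.A)) (m : ℕ) :
    Submodule k (Coch k Q R m) :=
  LinearMap.ker (dLin k Q R m)

/-- The degree-`m` cohomology `HH^m` of the complex `k(Γ ∥ B)` vanishes: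
every cocycle is a coboundary. -/
def CohomIsZero (k : Type) [Field k] (Q : Quiv) (R : Set (Q.A × Q.A)) (m : ℕ) : Prop :=
  cocSp k Q R m ≤ cobSp k Q R m

/-- The degree-`m` cohomology `HH^m` of the complex `k(Γ ∥ B)` is
finite-dimensional: there is a finite set of cocycles whose classes span it. -/
def CohomFinDim (k : Type) [Field k] (Q : Quiv) (R : Set (Q.A × Q.A)) (m : ℕ) : Prop :=
  ∃ G : Finset (Coch k Q R m), ↑G ⊆ (cocSp k Q R m : Set (Coch k Q R m)) ∧
    cocSp k Q R m ≤ cobSp k Q R m ⊔ Submodule.span k ↑G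

/-- The degree-`m` cohomology `HH^m` of the complex `k(Γ ∥ B)` has dimension at
most `n`: there are `n` cocycles whose classes span it. -/
def CohomDimLe (k : Type) [Field k] (Q : Quiv) (R : Set (Q.A × Q.A)) (m n : ℕ) : Prop :=
  ∃ G : Finset (Coch k Q R m), G.card ≤ n ∧
    ↑G ⊆ (cocSp k Q R m : Set (Coch k Q R m)) ∧
    cocSp k Q R m ≤ cobSp k Q R m ⊔ Submodule.span k ↑G

/-- `Gen` is a basis of the kernel of `d⁰`, i.e. it freely generates `HH⁰`. -/
def FreelyGeneratesKer0 (k : Type) [Field k] (Q : Quiv) (R : Set (Q.A × Q.A))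
    (Gen : Set (Coch k Q R 0)) : Prop :=
  (∀ x ∈ Gen, dLin k Q R 0 x = 0) ∧
  (∀ z : Coch k Q R 0, dLin k Q R 0 z = 0 → z ∈ Submodule.span k Gen) ∧
  LinearIndependent k (fun x : Gen => (x : Coch k Q R 0))

/-- The cohomology classes of the elements of `Gen` freely generate the
degree-`(m+1)` cohomology of `k(Γ ∥ B)`: all elements of `Gen` are cocycles,
every cocycle is congruent to an element of their span modulo coboundaries, no
nonzero element of their span is a coboundary, and `Gen` is linearly
independent. -/
def FreelyGeneratesCohom (k : Type) [Field k] (Q : Quiv) (R : Set (Q.A × Q.A)) (m : ℕ)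
    (Gen : Set (Coch k Q R (m + 1))) : Prop :=
  (∀ x ∈ Gen, dLin k Q R (m + 1) x = 0) ∧
  (∀ z : Coch k Q R (m + 1), dLin k Q R (m + 1) z = 0 →
      ∃ y : Coch k Q R m, z - dLin k Q R m y ∈ Submodule.span k Gen) ∧
  (∀ x ∈ Submodule.span k Gen, x ∈ LinearMap.range (dLin k Q R m) → x = 0) ∧
  LinearIndependent k (fun x : Gen => (x : Coch k Q R (m + 1)))

/-! ### The chain complex `k(B ⊙ Γ)` -/

/-- Membership in the degree-`m` basis `B ⊙ Γ_m` of the chain complex. -/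
def BGmem (Q : Quiv) (R : Set (Q.A × Q.A)) (m : ℕ) (x : PathDat Q × PathDat Q) : Prop :=
  InB Q R x.1 ∧ InG Q R x.2 ∧ plen Q x.2 = m ∧ AntiPar Q x.1 x.2

abbrev BGt (Q : Quiv) (R : Set (Q.A × Q.A)) (m : ℕ) :=
  {x : PathDat Q × PathDat Q // BGmem Q R m x}

/-- The degree-`m` component of the chain complex `k(B ⊙ Γ)`. -/
abbrev Chn (k : Type) [Field k] (Q : Quiv) (R : Set (Q.A × Q.A)) (m : ℕ) :=
  BGt Q R m →₀ k

/-- The basis vector of `k(B ⊙ Γ_m)` attached to a raw pair of path data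
(and `0` if the pair is not in `B ⊙ Γ_m`). -/
noncomputable def bw (k : Type) [Field k] (Q : Quiv) (R : Set (Q.A × Q.A)) (m : ℕ)
    (x : PathDat Q × PathDat Q) : Chn k Q R m := by
  classical
  exact if h : BGmem Q R m x then Finsupp.single (⟨x, h⟩ : BGt Q R m) (1 : k) else 0

/-- `l1(p)`: the last arrow of `p` (as a path of length one). -/
def l1P (Q : Quiv) (p : PathDat Q) : PathDat Q :=
  match p.2.getLast? with
  | none => p
  | some a => (Q.src a, [a])

/-- `l2(p)`: `p` with its last arrow removed. -/
def l2P (Q : Quiv) (p : PathDat Q) : PathDat Q := (p.1, p.2.dropLast)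

/-- `r1(p)`: `p` with its first arrow removed. -/
def r1P (Q : Quiv) (p : PathDat Q) : PathDat Q :=
  match p.2 with
  | [] => p
  | a :: l => (Q.tgt a, l)

/-- `r2(p)`: the first arrow of `p` (as a path of length one). -/
def r2P (Q : Quiv) (p : PathDat Q) : PathDat Q :=
  match p.2 with
  | [] => p
  | a :: _ => (Q.src a, [a])

/-- The raw first term `(α·l1(γ), l2(γ))` of the boundary of `(α, γ)`. -/
def d1raw (Q : Quiv) (x : PathDat Q × PathDat Q) : PathDat Q × PathDat Q :=
  match x.2.2.getLast? with
  | none => x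
  | some a => ((Q.src a, a :: x.1.2), (x.2.1, x.2.2.dropLast))

/-- The raw second term `(r2(γ)·α, r1(γ))` of the boundary of `(α, γ)`. -/
def d2raw (Q : Quiv) (x : PathDat Q × PathDat Q) : PathDat Q × PathDat Q :=
  match x.2.2 with
  | [] => x
  | c :: l => ((x.1.1, x.1.2 ++ [c]), (Q.tgt c, l))

/-- The boundary of a basis element:
`d_m (α, γ) = (α·l1(γ), l2(γ)) + (-1)^m (r2(γ)·α, r1(γ))` (in degree `m = m+1`),
where pairs whose first component is not in `B` are interpreted as `0`. -/
noncomputable def bdB (k : Type) [Field k] (Q : Quiv) (R : Set (Q.A × Q.A)) (m : ℕ)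
    (x : BGt Q R (m + 1)) : Chn k Q R m :=
  bw k Q R m (d1raw Q x.val) + ((-1 : k) ^ (m + 1)) • bw k Q R m (d2raw Q x.val)

/-- The boundary map `d_{m+1} : k(B ⊙ Γ_{m+1}) → k(B ⊙ Γ_m)`. -/
noncomputable def bd (k : Type) [Field k] (Q : Quiv) (R : Set (Q.A × Q.A)) (m : ℕ) :
    Chn k Q R (m + 1) →ₗ[k] Chn k Q R m :=
  Finsupp.linearCombination k (bdB k Q R m)

/-- The subspace of cycles in degree `m` (everything in degree `0`). -/
noncomputable def ZSp (k : Type) [Field k] (Q : Quiv) (R : Set (Q.A × Q.A)) :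
    (m : ℕ) → Submodule k (Chn k Q R m)
  | 0 => ⊤
  | m + 1 => LinearMap.ker (bd k Q R m)

/-- The subspace of boundaries in degree `m`. -/
noncomputable def BSp (k : Type) [Field k] (Q : Quiv) (R : Set (Q.A × Q.A)) (m : ℕ) :
    Submodule k (Chn k Q R m) :=
  LinearMap.range (bd k Q R m)

/-- The degree-`m` homology `HH_m` of the complex `k(B ⊙ Γ)` vanishes:
every cycle is a boundary. -/
def HomIsZero (k : Type) [Field k] (Q : Quiv) (R : Set (Q.A × Q.A)) (m : ℕ) : Prop :=
  ZSp k Q R m ≤ BSp k Q R m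

/-- The degree-`m` homology `HH_m` of the complex `k(B ⊙ Γ)` is
finite-dimensional: there is a finite set of cycles whose classes span it. -/
def HomFinDim (k : Type) [Field k] (Q : Quiv) (R : Set (Q.A × Q.A)) (m : ℕ) : Prop :=
  ∃ G : Finset (Chn k Q R m), ↑G ⊆ (ZSp k Q R m : Set (Chn k Q R m)) ∧
    ZSp k Q R m ≤ BSp k Q R m ⊔ Submodule.span k ↑G

/-- The concatenation `α γ` of an antiparallel pair (a cycle, or a trivial path). -/
def concatP (Q : Quiv) (x : PathDat Q × PathDat Q) : PathDat Q := (x.2.1, x.2.2 ++ x.1.2)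

/-- The degree-`m` component of the subcomplex `k(B ⊙ Γ)_C`, spanned by the
basis elements whose concatenation lies in the circuit (rotation class) of `c`. -/
noncomputable def Wsp (k : Type) [Field k] (Q : Quiv) (R : Set (Q.A × Q.A))
    (c : PathDat Q) (m : ℕ) : Submodule k (Chn k Q R m) :=
  Submodule.span k {z : Chn k Q R m |
    ∃ x : BGt Q R m, RotEquiv Q (concatP Q x.val) c ∧ z = Finsupp.single x (1 : k)}

/-- The boundaries of the subcomplex `k(B ⊙ Γ)_C` in degree `m`. -/
noncomputable def WB (k : Type) [Field k] (Q : Quiv) (R : Set (Q.A × Q.A))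
    (c : PathDat Q) (m : ℕ) : Submodule k (Chn k Q R m) :=
  Submodule.map (bd k Q R m) (Wsp k Q R c (m + 1))

/-- The cycles of the subcomplex `k(B ⊙ Γ)_C` in degree `m`. -/
noncomputable def WZ (k : Type) [Field k] (Q : Quiv) (R : Set (Q.A × Q.A))
    (c : PathDat Q) (m : ℕ) : Submodule k (Chn k Q R m) :=
  ZSp k Q R m ⊓ Wsp k Q R c m

/-- The degree-`m` homology of `k(B ⊙ Γ)_C` is one-dimensional, spanned by the
homology class of `v`. -/
def SubHomSpannedBy (k : Type) [Field k] (Q : Quiv) (R : Set (Q.A × Q.A))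
    (c : PathDat Q) (m : ℕ) (v : Chn k Q R m) : Prop :=
  v ∈ WZ k Q R c m ∧ v ∉ WB k Q R c m ∧
  ∀ z ∈ WZ k Q R c m, ∃ t : k, z - t • v ∈ WB k Q R c m

/-- `ĥ(c) = Σ_{i=0}^{r-1} (r1(rot^i c), r2(rot^i c))` (degree 1, for cocomplete cycles;
placed in degree `m`). -/
noncomputable def hCycR (k : Type) [Field k] (Q : Quiv) (R : Set (Q.A × Q.A)) (m : ℕ)
    (c : PathDat Q) : Chn k Q R m :=
  ∑ i ∈ Finset.range (periodP Q c),
    bw k Q R m (r1P Q (rotI Q i c), r2P Q (rotI Q i c))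

/-- `ĥ(c) = Σ_{i=0}^{r-1} (-1)^{(m+1) i} (s(rot^i c), rot^i c)` (degree `m`, for
complete cycles of length `m`). -/
noncomputable def hCycM (k : Type) [Field k] (Q : Quiv) (R : Set (Q.A × Q.A)) (m : ℕ)
    (c : PathDat Q) : Chn k Q R m :=
  ∑ i ∈ Finset.range (periodP Q c),
    ((-1 : k) ^ ((m + 1) * i)) • bw k Q R m ((psrc Q (rotI Q i c), []), rotI Q i c)

/-- The homology classes of the elements of `Gen` freely generate the degree-`m`
homology of `k(B ⊙ Γ)`. -/
def FreelyGeneratesHom (k : Type) [Field k] (Q : Quiv) (R : Set (Q.A × Q.A)) (m : ℕ)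
    (Gen : Set (Chn k Q R m)) : Prop :=
  (∀ x ∈ Gen, x ∈ ZSp k Q R m) ∧
  (∀ z ∈ ZSp k Q R m, ∃ y : Chn k Q R (m + 1), z - bd k Q R m y ∈ Submodule.span k Gen) ∧
  (∀ x ∈ Submodule.span k Gen, x ∈ LinearMap.range (bd k Q R m) → x = 0) ∧
  LinearIndependent k (fun x : Gen => (x : Chn k Q R m))

/-!
If `B` is finite, every cochain space is finite-dimensional. If `B` is infinite, some path
in `B` is longer than the number of arrows, so it repeats an arrow, and the stretch between
two occurrences is a cocomplete cycle `c`; its powers `cⁿ` are cocomplete cycles of pairwise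
different lengths. Each length `L` gives a cohomology class in degrees `0` and `1`, detected
by a linear form that vanishes on coboundaries:
* degree `0`: the sum of the `(e, w)` over all cocomplete cycles `w` of length `L` is a cocycle,
  since by gentleness `d (e, w) = (a, w a) - (a', a' w)` with `a` the first and `a'` the last
  arrow of `w`, and `(a', a' w)` is the first term for the rotation of `w`; it is detected
  by the coefficient of `(e, cⁿ)`;
* degree `1`: `(a, cⁿ a)` is a cocycle, detected by counting the basis elements `(a, α)` with
  `α` of length `L + 1` starting and ending with `a`.
-/

end GentleTT

theorem not_le_sup_span_of_dualFamily {k M ι : Type*} [Field k] [AddCommGroup M] [Module k M]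
    [Infinite ι] [DecidableEq ι] {Z W : Submodule k M} (z : ι → M) (φ : ι → Module.Dual k M)
    (hz : ∀ i, z i ∈ Z) (hW : ∀ i, ∀ w ∈ W, φ i w = 0)
    (hφz : ∀ i j, φ i (z j) = if i = j then 1 else 0) (G : Finset M) :
    ¬Z ≤ W ⊔ Submodule.span k G := by
  intro hle
  have hdec : ∀ i, ∃ g ∈ Submodule.span k (G : Set M), z i - g ∈ W := fun i => by
    obtain ⟨w, hw, g, hg, hsum⟩ := Submodule.mem_sup.mp (hle (hz i))
    exact ⟨g, hg, by rwa [← hsum, add_sub_cancel_right]⟩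
  choose g hg hzg using hdec
  have hφg : ∀ i j, φ i (g j) = if i = j then 1 else 0 := fun i j => by
    rw [← hφz i j, ← sub_eq_zero, ← map_sub, ← neg_sub, map_neg, hW i _ (hzg j), neg_zero]
  have hli : LinearIndependent k fun i => (⟨g i, hg i⟩ : Submodule.span k (G : Set M)) := by
    rw [linearIndependent_iff']
    intro s c hsum i hi
    simpa [map_sum, hφg, hi] using
      congrArg (fun x : Submodule.span k (G : Set M) => φ i x) hsum
  have := hli.finite
  exact not_finite ι

theorem List.isChain_and_iff {α : Type*} {r s : α → α → Prop} {l : List α} :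
    l.IsChain (fun a b => r a b ∧ s a b) ↔ l.IsChain r ∧ l.IsChain s := by
  induction l with
  | nil => simp
  | cons a l ih =>
    cases l with
    | nil => simp
    | cons b l => simp only [List.isChain_cons_cons, ih]; tauto

namespace GentleTT

section Paths

variable {Q : Quiv} {R : Set (Q.A × Q.A)}

def ComposableInB (Q : Quiv) (R : Set (Q.A × Q.A)) (a b : Q.A) : Prop :=
  Q.tgt a = Q.src b ∧ (a, b) ∉ R

theorem inB_iff {v : Q.V} {u : List Q.A} :
    InB Q R (v, u) ↔ u.IsChain (ComposableInB Q R) ∧ ∀ a ∈ u.head?, Q.src a = v := by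
  rw [show ComposableInB Q R = fun a b => Q.tgt a = Q.src b ∧ (a, b) ∉ R from rfl,
    List.isChain_and_iff]
  exact ⟨fun ⟨⟨h₁, h₂⟩, h₃⟩ => ⟨⟨h₁, h₃⟩, h₂⟩, fun ⟨⟨h₁, h₃⟩, h₂⟩ => ⟨⟨h₁, h₂⟩, h₃⟩⟩

theorem ptgt_append_singleton (v : Q.V) (u : List Q.A) (a : Q.A) :
    ptgt Q (v, u ++ [a]) = Q.tgt a := by
  simp [ptgt]

theorem finite_setOf_plen_eq (L : ℕ) : {p : PathDat Q | plen Q p = L}.Finite :=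
  (Set.finite_univ.prod (List.finite_length_eq Q.A L)).subset fun _ hp => ⟨trivial, hp⟩

theorem plen_powP (p : PathDat Q) (n : ℕ) : plen Q (powP Q p n) = n * plen Q p := by
  induction n with
  | zero => simp [powP, powL, plen]
  | succ n ih => simp_all [powP, powL, plen, Nat.succ_mul, Nat.add_comm]

theorem head?_powL {α : Type} {l : List α} {a : α} (hl : l.head? = some a) {n : ℕ}
    (hn : n ≠ 0) : (powL l n).head? = some a := by
  cases n <;> simp_all [powL]

theorem head?_powL_append {α : Type} {l : List α} {a : α} (hl : l.head? = some a) (n : ℕ) :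
    (powL l n ++ [a]).head? = some a := by
  cases n <;> simp_all [powL]

theorem isChain_powL_append {α : Type} {r : α → α → Prop} {l : List α} {a : α}
    (hl : l.head? = some a) (h : (l ++ [a]).IsChain r) (n : ℕ) :
    (powL l n ++ [a]).IsChain r := by
  induction n with
  | zero => simp [powL]
  | succ n ih =>
    rw [powL, List.append_assoc, List.isChain_append]
    refine ⟨h.prefix (List.prefix_append _ _), ih, fun x hx y hy => ?_⟩
    rw [head?_powL_append hl] at hy
    cases hy
    exact (List.isChain_append.mp h).2.2 x hx a rfl

theorem cocomplete_iff {v : Q.V} {l : List Q.A} :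
    Cocomplete Q R (v, l) ↔
      ∃ a, l.head? = some a ∧ Q.src a = v ∧ (l ++ [a]).IsChain (ComposableInB Q R) := by
  constructor
  · rintro ⟨⟨-, hne, -⟩, hsq⟩
    obtain ⟨a, t, rfl⟩ := List.exists_cons_of_ne_nil hne
    obtain ⟨hc, hsrc⟩ := inB_iff.mp hsq
    exact ⟨a, rfl, hsrc a rfl, hc.prefix ⟨t ++ [], by simp [powL]⟩⟩
  · rintro ⟨a, hl, hsrc, hc⟩
    have hsrc' : ∀ x ∈ l.head?, Q.src x = v := by
      rintro x hx
      rw [hl] at hx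
      cases hx
      exact hsrc
    have hne : l ≠ [] := by rintro rfl; cases hl
    obtain ⟨d, b, rfl⟩ := (List.eq_nil_or_concat' l).resolve_left hne
    have hba : ComposableInB Q R b a := (List.isChain_append.mp hc).2.2 b (by simp) a rfl
    refine ⟨⟨⟨(hc.prefix (List.prefix_append _ _)).imp fun _ _ h => h.1, hsrc'⟩, hne, ?_⟩, ?_⟩
    · rw [psrc, ptgt_append_singleton, hba.1, hsrc]
    · refine inB_iff.mpr ⟨(isChain_powL_append hl hc 2).prefix (List.prefix_append _ _), ?_⟩
      rw [head?_powL hl two_ne_zero, ← hl]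
      exact hsrc'

theorem cocomplete_powP {p : PathDat Q} (hp : Cocomplete Q R p) {n : ℕ} (hn : n ≠ 0) :
    Cocomplete Q R (powP Q p n) := by
  obtain ⟨a, hl, hsrc, hc⟩ := cocomplete_iff.mp hp
  exact cocomplete_iff.mpr ⟨a, head?_powL hl hn, hsrc, isChain_powL_append hl hc n⟩

theorem rotP_append_singleton (v : Q.V) (d : List Q.A) (b : Q.A) :
    rotP Q (v, d ++ [b]) = (Q.src b, b :: d) := by
  simp [rotP]

theorem plen_rotP (p : PathDat Q) : plen Q (rotP Q p) = plen Q p := by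
  obtain ⟨v, l⟩ := p
  rcases List.eq_nil_or_concat' l with rfl | ⟨d, b, rfl⟩
  · rfl
  · simp [rotP_append_singleton, plen]

theorem cocomplete_rotP {p : PathDat Q} (hp : Cocomplete Q R p) :
    Cocomplete Q R (rotP Q p) := by
  obtain ⟨v, l⟩ := p
  obtain ⟨a, hl, -, hc⟩ := cocomplete_iff.mp hp
  obtain ⟨d, b, rfl⟩ := (List.eq_nil_or_concat' l).resolve_left (by rintro rfl; cases hl)
  rw [rotP_append_singleton, cocomplete_iff]
  exact ⟨b, rfl, rfl, (isChain_powL_append hl hc 2).infix ⟨d, [a], by simp [powL]⟩⟩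

theorem rotP_injOn : Set.InjOn (rotP Q) {p | IsCycle Q p} := by
  rintro ⟨v, l⟩ ⟨⟨-, hsrc⟩, hne, -⟩ ⟨v', l'⟩ ⟨⟨-, hsrc'⟩, hne', -⟩ h
  obtain ⟨d, b, rfl⟩ := (List.eq_nil_or_concat' l).resolve_left hne
  obtain ⟨d', b', rfl⟩ := (List.eq_nil_or_concat' l').resolve_left hne'
  simp only [rotP_append_singleton, Prod.mk.injEq, List.cons.injEq] at h
  obtain ⟨-, rfl, rfl⟩ := h
  obtain ⟨x, hx⟩ := Option.ne_none_iff_exists'.mp (by simp : (d ++ [b]).head? ≠ none)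
  exact Prod.ext ((hsrc x hx).symm.trans (hsrc' x hx)) rfl

noncomputable def cocompleteCycles (Q : Quiv) (R : Set (Q.A × Q.A)) (L : ℕ) :
    Finset (PathDat Q) :=
  ((finite_setOf_plen_eq L).subset fun _ hp => hp.2 :
    {p : PathDat Q | Cocomplete Q R p ∧ plen Q p = L}.Finite).toFinset

theorem mem_cocompleteCycles {L : ℕ} {p : PathDat Q} :
    p ∈ cocompleteCycles Q R L ↔ Cocomplete Q R p ∧ plen Q p = L :=
  Set.Finite.mem_toFinset _

theorem sum_cocompleteCycles_rotP {M : Type*} [AddCommMonoid M] (L : ℕ) (f : PathDat Q → M) :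
    ∑ p ∈ cocompleteCycles Q R L, f (rotP Q p) = ∑ p ∈ cocompleteCycles Q R L, f p := by
  have hmaps : Set.MapsTo (rotP Q) (cocompleteCycles Q R L) (cocompleteCycles Q R L) :=
    fun p hp => by
      obtain ⟨hc, hlen⟩ := mem_cocompleteCycles.mp hp
      exact mem_cocompleteCycles.mpr ⟨cocomplete_rotP hc, (plen_rotP p).trans hlen⟩
  have hinj : Set.InjOn (rotP Q) (cocompleteCycles Q R L) :=
    rotP_injOn.mono fun p hp => (mem_cocompleteCycles.mp hp).1.1
  have hbij := ((cocompleteCycles Q R L).finite_toSet.injOn_iff_bijOn_of_mapsTo hmaps).mp hinj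
  exact Finset.sum_nbij (rotP Q) hmaps hinj hbij.surjOn fun _ _ => rfl

theorem plen_powP_succ_injective {p : PathDat Q} (hp : Cocomplete Q R p) :
    Function.Injective fun n : ℕ => plen Q (powP Q p (n + 1)) := by
  have hpos : 0 < plen Q p := List.length_pos_iff.mpr hp.1.2.1
  intro n n' h
  simp only [plen_powP] at h
  exact Nat.succ_injective (Nat.eq_of_mul_eq_mul_right hpos h)

end Paths

section Cochains

variable {k : Type} [Field k] {Q : Quiv} {R : Set (Q.A × Q.A)}

theorem bv_of_gbmem {m : ℕ} {y : PathDat Q × PathDat Q} (h : GBmem Q R m y) :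
    bv k Q R m y = Finsupp.single ⟨y, h⟩ 1 :=
  dif_pos h

theorem bv_of_not_gbmem {m : ℕ} {y : PathDat Q × PathDat Q} (h : ¬GBmem Q R m y) :
    bv k Q R m y = 0 :=
  dif_neg h

theorem dLin_bv {m : ℕ} {y : PathDat Q × PathDat Q} (h : GBmem Q R m y) :
    dLin k Q R m (bv k Q R m y) = dB k Q R m ⟨y, h⟩ := by
  rw [bv_of_gbmem h, dLin, Finsupp.linearCombination_single, one_smul]

open Classical in
theorem dB_eq (m : ℕ) (x : GB Q R m) :
    dB k Q R m x =
      ∑ b : Q.A, bv k Q R (m + 1) (extL Q b x.val.1, extL Q b x.val.2) -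
        (-1 : k) ^ m • ∑ a : Q.A, if Q.tgt a = x.val.1.1 then
          bv k Q R (m + 1) (extR Q a x.val.1, extR Q a x.val.2) else 0 := by
  unfold dB bv
  congr 2
  refine Finset.sum_congr rfl fun a _ => ?_
  by_cases ha : Q.tgt a = x.val.1.1 <;> simp [ha, psrc]

open Classical in
noncomputable def sumCoeffs (k : Type) [Field k] (Q : Quiv) (R : Set (Q.A × Q.A)) (m : ℕ)
    (P : PathDat Q × PathDat Q → Prop) : Coch k Q R m →ₗ[k] k :=
  Finsupp.linearCombination k fun x => if P x.val then 1 else 0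

open Classical in
theorem sumCoeffs_bv {m : ℕ} (P : PathDat Q × PathDat Q → Prop) (y : PathDat Q × PathDat Q) :
    sumCoeffs k Q R m P (bv k Q R m y) = if GBmem Q R m y ∧ P y then 1 else 0 := by
  by_cases h : GBmem Q R m y
  · simp [bv_of_gbmem h, sumCoeffs, h]
  · simp [bv_of_not_gbmem h, h]

/-- The pair `(a, w a)` in the paper's notation, `a` the first arrow of `w`. -/
def closingPair (w : PathDat Q) : PathDat Q × PathDat Q :=
  ((w.1, w.2.take 1), (w.1, w.2 ++ w.2.take 1))

theorem closingPair_of_head? {v : Q.V} {l : List Q.A} {a : Q.A} (hl : l.head? = some a) :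
    closingPair (v, l) = (extL Q a (v, []), extL Q a (v, l)) := by
  simp [closingPair, extL, List.take_one, hl]

theorem closingPair_rotP (v : Q.V) (d : List Q.A) (b : Q.A) :
    closingPair (rotP Q (v, d ++ [b])) = (extR Q b (v, []), extR Q b (v, d ++ [b])) := by
  simp [rotP_append_singleton, closingPair, extR]

theorem inB_of_cocomplete {p : PathDat Q} (hp : Cocomplete Q R p) : InB Q R p := by
  obtain ⟨v, l⟩ := p
  obtain ⟨a, -, -, hc⟩ := cocomplete_iff.mp hp
  exact inB_iff.mpr ⟨hc.prefix (List.prefix_append _ _), hp.1.1.2⟩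

theorem gbmem_zero_of_cocomplete {w : PathDat Q} (hw : Cocomplete Q R w) :
    GBmem Q R 0 ((w.1, []), w) :=
  ⟨⟨⟨List.isChain_nil, by simp⟩, List.isChain_nil⟩, rfl, inB_of_cocomplete hw, rfl, hw.1.2.2⟩

theorem gbmem_closingPair {w : PathDat Q} (hw : Cocomplete Q R w) :
    GBmem Q R 1 (closingPair w) := by
  obtain ⟨v, l⟩ := w
  obtain ⟨a, hl, hsrc, hc⟩ := cocomplete_iff.mp hw
  rw [closingPair_of_head? hl]
  refine ⟨⟨⟨List.isChain_singleton a, by simpa [extL] using hsrc⟩, List.isChain_singleton a⟩,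
    rfl, inB_iff.mpr ⟨hc, ?_⟩, rfl, ?_⟩
  · simpa [List.head?_append, hl] using hsrc
  · simp [extL, ptgt]

end Cochains

section DegreeZero

variable {k : Type} [Field k] {Q : Quiv} {R : Set (Q.A × Q.A)}

/-- Gentleness leaves a single term in each half of the differential. -/
theorem dB_zero_of_cocomplete (hg : IsGentle Q R) {w : PathDat Q} (hw : Cocomplete Q R w) :
    dB k Q R 0 ⟨((w.1, []), w), gbmem_zero_of_cocomplete hw⟩ =
      bv k Q R 1 (closingPair w) - bv k Q R 1 (closingPair (rotP Q w)) := by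
  obtain ⟨v, l⟩ := w
  obtain ⟨a, hl, hsrc, hc⟩ := cocomplete_iff.mp hw
  obtain ⟨d, b, rfl⟩ := (List.eq_nil_or_concat' l).resolve_left (by rintro rfl; cases hl)
  have hba : ComposableInB Q R b a := (List.isChain_append.mp hc).2.2 b (by simp) a rfl
  rw [dB_eq, pow_zero, one_smul, closingPair_of_head? hl, closingPair_rotP]
  congr 1
  · refine Fintype.sum_eq_single a fun b' hb' => bv_of_not_gbmem fun hm => hb' ?_
    have hc' := (inB_iff.mp hm.2.2.1).1
    exact hg.uniqNotRelAfter b ((List.isChain_append.mp hc').2.2 b (by simp) b' rfl) hba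
  · refine (Fintype.sum_eq_single b fun c hc => ?_).trans (if_pos (hba.1.trans hsrc))
    refine ite_eq_right_iff.mpr fun _ => bv_of_not_gbmem fun hm => hc ?_
    have hc' := (inB_iff.mp hm.2.2.1).1
    exact hg.uniqNotRelBefore a (hc'.rel_head? hl) hba

noncomputable def centralCochain (k : Type) [Field k] (Q : Quiv) (R : Set (Q.A × Q.A))
    (L : ℕ) : Coch k Q R 0 :=
  ∑ w ∈ cocompleteCycles Q R L, bv k Q R 0 ((w.1, []), w)

theorem dLin_centralCochain (hg : IsGentle Q R) (L : ℕ) :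
    dLin k Q R 0 (centralCochain k Q R L) = 0 := by
  rw [centralCochain, map_sum]
  calc ∑ w ∈ cocompleteCycles Q R L, dLin k Q R 0 (bv k Q R 0 ((w.1, []), w))
      = ∑ w ∈ cocompleteCycles Q R L,
          (bv k Q R 1 (closingPair w) - bv k Q R 1 (closingPair (rotP Q w))) :=
        Finset.sum_congr rfl fun w hw => by
          have hw := (mem_cocompleteCycles.mp hw).1
          rw [dLin_bv (gbmem_zero_of_cocomplete hw), dB_zero_of_cocomplete hg hw]
    _ = 0 := by
      rw [Finset.sum_sub_distrib,
        sum_cocompleteCycles_rotP L fun w => bv k Q R 1 (closingPair w), sub_self]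

open Classical in
theorem sumCoeffs_centralCochain {q : PathDat Q} (hq : Cocomplete Q R q) (L : ℕ) :
    sumCoeffs k Q R 0 (· = ((q.1, []), q)) (centralCochain k Q R L) =
      if plen Q q = L then 1 else 0 := by
  rw [centralCochain, map_sum]
  calc ∑ w ∈ cocompleteCycles Q R L,
        sumCoeffs k Q R 0 (· = ((q.1, []), q)) (bv k Q R 0 ((w.1, []), w))
      = ∑ w ∈ cocompleteCycles Q R L, if w = q then (1 : k) else 0 :=
        Finset.sum_congr rfl fun w _ => by
          by_cases h : w = q
          · simp [sumCoeffs_bv, gbmem_zero_of_cocomplete hq, h]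
          · simp [sumCoeffs_bv, h]
    _ = _ := by simp [Finset.sum_ite_eq', mem_cocompleteCycles, hq]

theorem not_cohomFinDim_zero (hg : IsGentle Q R) {p : PathDat Q} (hp : Cocomplete Q R p) :
    ¬CohomFinDim k Q R 0 := by
  rintro ⟨G, -, hle⟩
  refine not_le_sup_span_of_dualFamily
    (fun n : ℕ => centralCochain k Q R (plen Q (powP Q p (n + 1))))
    (fun n => sumCoeffs k Q R 0 (· = (((powP Q p (n + 1)).1, []), powP Q p (n + 1))))
    (fun _ => LinearMap.mem_ker.mpr (dLin_centralCochain hg _))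
    (fun _ w hw => by rw [(Submodule.mem_bot k).mp hw, map_zero]) (fun n n' => ?_) G hle
  simp only [sumCoeffs_centralCochain (cocomplete_powP hp n.succ_ne_zero),
    (plen_powP_succ_injective hp).eq_iff]

end DegreeZero

section DegreeOne

variable {k : Type} [Field k] {Q : Quiv} {R : Set (Q.A × Q.A)}

def IsLoopPair (Q : Quiv) (L : ℕ) (y : PathDat Q × PathDat Q) : Prop :=
  plen Q y.2 = L + 1 ∧ ∃ a, y.1.2 = [a] ∧ y.2.2.head? = some a ∧ y.2.2.getLast? = some a

/-- Extending `(a, α)` on either side meets `a` twice: once in `Γ`, once in `B`. -/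
theorem dB_one_eq_zero_of_isLoopPair {y : PathDat Q × PathDat Q} (hy : GBmem Q R 1 y)
    {L : ℕ} (hloop : IsLoopPair Q L y) : dB k Q R 1 ⟨y, hy⟩ = 0 := by
  obtain ⟨-, a, h1, hhead, hlast⟩ := hloop
  have hL : ∀ b, bv k Q R (1 + 1) (extL Q b y.1, extL Q b y.2) = 0 := fun b =>
    bv_of_not_gbmem fun hm => by
      have hΓ : ([a] ++ [b]).IsChain (fun a b => (a, b) ∈ R) := h1 ▸ hm.1.2
      have hB := (inB_iff.mp hm.2.2.1).1
      exact ((List.isChain_append.mp hB).2.2 a hlast b rfl).2 (List.isChain_pair.mp hΓ)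
  have hR : ∀ c, bv k Q R (1 + 1) (extR Q c y.1, extR Q c y.2) = 0 := fun c =>
    bv_of_not_gbmem fun hm => by
      have hΓ : [c, a].IsChain (fun a b => (a, b) ∈ R) := h1 ▸ hm.1.2
      exact ((inB_iff.mp hm.2.2.1).1.rel_head? hhead).2 (List.isChain_pair.mp hΓ)
  simp [dB_eq, hL, hR]

open Classical in
theorem sum_isLoopPair_extL {L : ℕ} (hL : L ≠ 0) {v : Q.V} {l : List Q.A}
    (hB : InB Q R (v, l)) :
    (∑ b : Q.A, if GBmem Q R 1 (extL Q b (v, []), extL Q b (v, l)) ∧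
        IsLoopPair Q L (extL Q b (v, []), extL Q b (v, l)) then (1 : k) else 0) =
      if Cocomplete Q R (v, l) ∧ plen Q (v, l) = L then 1 else 0 := by
  rcases eq_or_ne l [] with rfl | hne
  · simp [IsLoopPair, plen, extL, hL, hL.symm]
  obtain ⟨a, hl⟩ := Option.ne_none_iff_exists'.mp (mt List.head?_eq_none_iff.mp hne)
  have key : ∀ b, (GBmem Q R 1 (extL Q b (v, []), extL Q b (v, l)) ∧
      IsLoopPair Q L (extL Q b (v, []), extL Q b (v, l))) ↔
      b = a ∧ Cocomplete Q R (v, l) ∧ plen Q (v, l) = L := by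
    intro b
    constructor
    · rintro ⟨hm, hlen, a', h1, hhead, -⟩
      obtain rfl : b = a' := by simpa [extL] using h1
      obtain rfl : b = a := by simpa [extL, List.head?_append, hl] using hhead.symm
      refine ⟨rfl, cocomplete_iff.mpr ⟨b, hl, (inB_iff.mp hB).2 b hl,
        (inB_iff.mp hm.2.2.1).1⟩, by simpa [plen, extL] using hlen⟩
    · rintro ⟨rfl, hcoc, hlen⟩
      rw [← closingPair_of_head? hl]
      refine ⟨gbmem_closingPair hcoc, ?_⟩
      rw [closingPair_of_head? hl]
      exact ⟨by simpa [plen, extL] using hlen, b, rfl, by simp [extL, List.head?_append, hl],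
        by simp [extL]⟩
  simp only [key, ite_and, Fintype.sum_ite_eq']

open Classical in
theorem sum_isLoopPair_extR {L : ℕ} (hL : L ≠ 0) {v : Q.V} {l : List Q.A}
    (hB : InB Q R (v, l)) (hcyc : ptgt Q (v, l) = v) :
    (∑ c : Q.A, if Q.tgt c = v then
        (if GBmem Q R 1 (extR Q c (v, []), extR Q c (v, l)) ∧
          IsLoopPair Q L (extR Q c (v, []), extR Q c (v, l)) then (1 : k) else 0) else 0) =
      if Cocomplete Q R (v, l) ∧ plen Q (v, l) = L then 1 else 0 := by
  rcases List.eq_nil_or_concat' l with rfl | ⟨d, b, rfl⟩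
  · simp [IsLoopPair, plen, extR, hL, hL.symm]
  obtain ⟨a, hl⟩ := Option.ne_none_iff_exists'.mp (by simp : (d ++ [b]).head? ≠ none)
  have key : ∀ c, (Q.tgt c = v ∧ GBmem Q R 1 (extR Q c (v, []), extR Q c (v, d ++ [b])) ∧
      IsLoopPair Q L (extR Q c (v, []), extR Q c (v, d ++ [b]))) ↔
      c = b ∧ Cocomplete Q R (v, d ++ [b]) ∧ plen Q (v, d ++ [b]) = L := by
    intro c
    constructor
    · rintro ⟨-, hm, hlen, a', h1, -, hlast⟩
      have hca : c = a' := by simpa [extR] using h1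
      subst hca
      obtain rfl : b = c := Option.some.inj ((List.getLast?_concat (l := c :: d)).symm.trans hlast)
      have hc := (inB_iff.mp hm.2.2.1).1
      have hchain : (d ++ [b] ++ [a]).IsChain (ComposableInB Q R) :=
        List.isChain_append.mpr ⟨(inB_iff.mp hB).1, List.isChain_singleton a,
          fun x hx y hy => by
            simp only [List.getLast?_concat, List.head?_cons, Option.mem_def,
              Option.some.injEq] at hx hy
            subst hx hy
            exact hc.rel_head? hl⟩
      exact ⟨rfl, cocomplete_iff.mpr ⟨a, hl, (inB_iff.mp hB).2 a hl, hchain⟩,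
        by simpa [plen, extR] using hlen⟩
    · rintro ⟨rfl, hcoc, hlen⟩
      refine ⟨by rwa [ptgt_append_singleton] at hcyc, ?_⟩
      rw [← closingPair_rotP]
      refine ⟨gbmem_closingPair (cocomplete_rotP hcoc), ?_⟩
      rw [closingPair_rotP]
      exact ⟨by simpa [plen, extR] using hlen, c, rfl, rfl, List.getLast?_concat (l := c :: d)⟩
  simp only [← ite_and, key]
  simp only [ite_and, Fintype.sum_ite_eq']

/-- The differential of `(e, β)` meets the loop pairs once with each sign, exactly when `β` is
cocomplete of length `L`; for `L = 0` the trivial `β` would spoil this. -/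
theorem sumCoeffs_isLoopPair_dLin {L : ℕ} (hL : L ≠ 0) (f : Coch k Q R 0) :
    sumCoeffs k Q R 1 (IsLoopPair Q L) (dLin k Q R 0 f) = 0 := by
  suffices h : sumCoeffs k Q R 1 (IsLoopPair Q L) ∘ₗ dLin k Q R 0 = 0 from
    LinearMap.congr_fun h f
  refine Finsupp.lhom_ext fun x c => ?_
  rw [LinearMap.comp_apply, dLin, Finsupp.linearCombination_single, map_smul,
    LinearMap.zero_apply, smul_eq_zero]
  right
  obtain ⟨⟨⟨v, g⟩, ⟨v', l⟩⟩, hx⟩ := x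
  obtain rfl : g = [] := List.eq_nil_of_length_eq_zero hx.2.1
  obtain rfl : v = v' := hx.2.2.2.1
  rw [dB_eq, pow_zero, one_smul, map_sub, map_sum, map_sum]
  dsimp only
  simp only [apply_ite (sumCoeffs k Q R 1 (IsLoopPair Q L)), sumCoeffs_bv, map_zero]
  rw [sum_isLoopPair_extL hL hx.2.2.1, sum_isLoopPair_extR hL hx.2.2.1 hx.2.2.2.2.symm, sub_self]

theorem isLoopPair_closingPair_iff {L : ℕ} {w : PathDat Q} (hw : Cocomplete Q R w) :
    IsLoopPair Q L (closingPair w) ↔ plen Q w = L := by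
  obtain ⟨v, l⟩ := w
  obtain ⟨a, hl, -, -⟩ := cocomplete_iff.mp hw
  simp [IsLoopPair, closingPair, List.take_one, hl, plen, List.head?_append]

theorem not_cohomFinDim_one {p : PathDat Q} (hp : Cocomplete Q R p) :
    ¬CohomFinDim k Q R 1 := by
  rintro ⟨G, -, hle⟩
  have hq : ∀ n : ℕ, Cocomplete Q R (powP Q p (n + 1)) :=
    fun n => cocomplete_powP hp n.succ_ne_zero
  refine not_le_sup_span_of_dualFamily
    (fun n : ℕ => bv k Q R 1 (closingPair (powP Q p (n + 1))))
    (fun n => sumCoeffs k Q R 1 (IsLoopPair Q (plen Q (powP Q p (n + 1)))))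
    (fun n => ?_) (fun n w hw => ?_) (fun n n' => ?_) G hle
  · refine LinearMap.mem_ker.mpr ?_
    rw [dLin_bv (gbmem_closingPair (hq n))]
    exact dB_one_eq_zero_of_isLoopPair _ ((isLoopPair_closingPair_iff (hq n)).mpr rfl)
  · obtain ⟨f, rfl⟩ := hw
    exact sumCoeffs_isLoopPair_dLin (List.length_pos_iff.mpr (hq n).1.2.1).ne' f
  · simp [sumCoeffs_bv, gbmem_closingPair (hq n'), isLoopPair_closingPair_iff (hq n'),
      (plen_powP_succ_injective hp).eq_iff, eq_comm]

end DegreeOne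

section FiniteB

variable {k : Type} [Field k] {Q : Quiv} {R : Set (Q.A × Q.A)}

theorem cohomFinDim_of_finite (hB : {p : PathDat Q | InB Q R p}.Finite) (m : ℕ) :
    CohomFinDim k Q R m := by
  have : Finite (GB Q R m) :=
    Set.Finite.to_subtype (s := {x | GBmem Q R m x})
      (((finite_setOf_plen_eq m).prod hB).subset fun _ hx => ⟨hx.2.1, hx.2.2.1⟩)
  obtain ⟨G, hG⟩ := IsNoetherian.noetherian (cocSp k Q R m)
  exact ⟨G, hG ▸ Submodule.subset_span, hG ▸ le_sup_right⟩

theorem infinite_setOf_inB_of_cocomplete {p : PathDat Q} (hp : Cocomplete Q R p) :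
    {p : PathDat Q | InB Q R p}.Infinite :=
  Set.infinite_of_injective_forall_mem (f := fun n : ℕ => powP Q p (n + 1))
    (fun _ _ h => plen_powP_succ_injective hp (congrArg (plen Q) h))
    fun n => inB_of_cocomplete (cocomplete_powP hp n.succ_ne_zero)

theorem exists_cocomplete_of_not_nodup {p : PathDat Q} (hp : InB Q R p) (hnd : ¬p.2.Nodup) :
    ∃ q, Cocomplete Q R q := by
  obtain ⟨v, l⟩ := p
  obtain ⟨a, ha⟩ : ∃ a, [a, a].Sublist l := by simpa [List.nodup_iff_sublist] using hnd
  obtain ⟨r₁, r₂, rfl, ha₁, ha₂⟩ := List.cons_sublist_iff.mp ha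
  obtain ⟨s₁, t₁, rfl⟩ := List.append_of_mem ha₁
  obtain ⟨s₂, t₂, rfl⟩ := List.append_of_mem (List.singleton_sublist.mp ha₂)
  exact ⟨(Q.src a, a :: (t₁ ++ s₂)), cocomplete_iff.mpr
    ⟨a, rfl, rfl, (inB_iff.mp hp).1.infix ⟨s₁, t₂, by simp⟩⟩⟩

theorem exists_cocomplete_of_infinite (h : {p : PathDat Q | InB Q R p}.Infinite) :
    ∃ p, Cocomplete Q R p := by
  obtain ⟨p, hp, hlen⟩ : ∃ p ∈ {p : PathDat Q | InB Q R p}, Fintype.card Q.A < plen Q p := by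
    by_contra! hcon
    exact h ((Set.finite_univ.prod (List.finite_length_le Q.A _)).subset
      fun p hp => ⟨trivial, hcon p hp⟩)
  exact exists_cocomplete_of_not_nodup hp fun hnd => hnd.length_le_card.not_gt hlen

end FiniteB

/-- For a gentle presentation `(Q, R)`, the following are
equivalent: `B` is finite (i.e. `kQ/⟨R⟩` is finite-dimensional), `HH⁰` is
finite-dimensional, `HH¹` is finite-dimensional, and there is no cocomplete
cycle in `(Q, R)`. Moreover, when these hold, `HH^m` is finite-dimensional for
every `m ≥ 0`. -/
theorem finiteness_of_cohomology (k : Type) [Field k] (Q : Quiv)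
    (R : Set (Q.A × Q.A)) (hg : IsGentle Q R) :
    ({p : PathDat Q | InB Q R p}.Finite ↔ CohomFinDim k Q R 0) ∧
    ({p : PathDat Q | InB Q R p}.Finite ↔ CohomFinDim k Q R 1) ∧
    ({p : PathDat Q | InB Q R p}.Finite ↔ ¬∃ p : PathDat Q, Cocomplete Q R p) ∧
    ({p : PathDat Q | InB Q R p}.Finite → ∀ m : ℕ, CohomFinDim k Q R m) := by
  have hfin : {p : PathDat Q | InB Q R p}.Finite ↔ ¬∃ p : PathDat Q, Cocomplete Q R p :=
    by
      rw [← not_iff_not, not_not]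
      exact ⟨exists_cocomplete_of_infinite, fun ⟨p, hp⟩ => infinite_setOf_inB_of_cocomplete hp⟩
  exact ⟨⟨fun h => cohomFinDim_of_finite h 0,
      fun h => hfin.mpr fun ⟨p, hp⟩ => not_cohomFinDim_zero hg hp h⟩,
    ⟨fun h => cohomFinDim_of_finite h 1, fun h => hfin.mpr fun ⟨p, hp⟩ => not_cohomFinDim_one hp h⟩,
    hfin, cohomFinDim_of_finite⟩

end GentleTT
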